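/- arXiv:2005.04427 — 6 statements merged into one kernel-verified Lean document; each statement's English description precedes it below -/
import Mathlib

section
/- Let n ≥ 1 and T ≥ n be integers and let U = (ū_0,…,ū_T), Y = (ȳ_0,…,ȳ_T) be real data sequences. Let σ, M ∈ ℂ and suppose the set Σ_{U,Y} is nonempty. Then the inclusion Σ_{U,Y} ⊆ Σ_{σ,M} holds if and only if there exists ξ ∈ ℂ^{T−n+1} such that H_n(U)·ξ = γ_n(σ) and H_n(Y)·ξ = M·γ_n(σ). -/
/-!
`Σ_{U,Y}` is the affine space `{θ | θ A = b}` of the real data matrix `A = [H_n(U); H̄_n(Y)]`,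
with `b` the last row of `H_n(Y)`, and `Σ_{σ,M}` is `{θ | θ c = M σ^n}` with
`c = [γ_n(σ); M γ_{n-1}(σ)]`.
A nonempty affine space `{θ A = b}` lies in a hyperplane `{θ c = d}` iff every left-kernel vector
of `A` annihilates `c` and `θ₀ c = d` for one point `θ₀` of it; by the Fredholm alternative this
means `c = A ξ` with `b ξ = d`. Real left-kernel vectors suffice because `A` is real: a complex one splits into its real
and imaginary parts. Read row by row, `A ξ = c` and `b ξ = M σ^n` say exactly
`H_n(U) ξ = γ_n(σ)` and `H_n(Y) ξ = M γ_n(σ)`.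
-/

open Matrix

/-- The Hankel matrix of depth `n` (over `ℂ`) of a real data sequence `u = (u 0, …, u T)`:
its `(i,j)` entry is `u (i+j)`. -/
noncomputable def hankelC (u : ℕ → ℝ) (n T : ℕ) : Matrix (Fin (n + 1)) (Fin (T - n + 1)) ℂ :=
  fun i j => (u ((i : ℕ) + (j : ℕ)) : ℂ)

/-- `γ_n(σ) = (1, σ, …, σ^n)ᵀ`. -/
noncomputable def gammaVec (n : ℕ) (σ : ℂ) : Fin (n + 1) → ℂ :=
  fun i => σ ^ (i : ℕ)

/-- A parameter row vector `θ = [q, -p] ∈ ℝ^{2n+1}` belongs to `Σ_{U,Y}`, i.e.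
`[q -p]·[H_n(U); H̄_n(Y)] = [y_n ⋯ y_T]`. -/
def inSigmaUY (n T : ℕ) (u y : ℕ → ℝ) (θ : Fin (2 * n + 1) → ℝ) : Prop :=
  ∀ j : Fin (T - n + 1),
    (∑ i : Fin (2 * n + 1),
      θ i * (if (i : ℕ) < n + 1 then u ((i : ℕ) + (j : ℕ))
             else y ((i : ℕ) - (n + 1) + (j : ℕ)))) = y (n + (j : ℕ))

/-- A parameter row vector `θ = [q, -p] ∈ ℝ^{2n+1}` belongs to `Σ_{σ,M}`, i.e.
`[q -p]·[γ_n(σ); M·γ_{n-1}(σ)] = M·σ^n`. -/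
def inSigmaM (n : ℕ) (σ M : ℂ) (θ : Fin (2 * n + 1) → ℝ) : Prop :=
  (∑ i : Fin (2 * n + 1),
    (θ i : ℂ) * (if (i : ℕ) < n + 1 then σ ^ (i : ℕ)
                 else M * σ ^ ((i : ℕ) - (n + 1)))) = M * σ ^ n

/-- The stacked matrix `[H_n(U); H_n(Y)]` over `ℂ`. -/
noncomputable def stackUY (u y : ℕ → ℝ) (n T : ℕ) :
    Matrix (Fin (n + 1) ⊕ Fin (n + 1)) (Fin (T - n + 1)) ℂ :=
  Matrix.fromRows (hankelC u n T) (hankelC y n T)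

/-- The column `(0; γ_n(σ))`. -/
noncomputable def colZeroGamma (n : ℕ) (σ : ℂ) :
    Matrix (Fin (n + 1) ⊕ Fin (n + 1)) (Fin 1) ℂ :=
  Matrix.of fun i _ => Sum.elim (fun _ : Fin (n + 1) => (0 : ℂ)) (fun k : Fin (n + 1) => σ ^ (k : ℕ)) i

/-- The column `(γ_n(σ); 0)`. -/
noncomputable def colGammaZero (n : ℕ) (σ : ℂ) :
    Matrix (Fin (n + 1) ⊕ Fin (n + 1)) (Fin 1) ℂ :=
  Matrix.of fun i _ => Sum.elim (fun k : Fin (n + 1) => σ ^ (k : ℕ)) (fun _ : Fin (n + 1) => (0 : ℂ)) i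

theorem Matrix.exists_mulVec_eq_iff_forall_vecMul_eq_zero {K m n : Type*} [Field K] [Fintype m]
    [Fintype n] (A : Matrix m n K) (v : m → K) :
    (∃ ξ, A *ᵥ ξ = v) ↔ ∀ η, η ᵥ* A = 0 → η ⬝ᵥ v = 0 := by
  constructor
  · rintro ⟨ξ, rfl⟩ η hη
    rw [dotProduct_mulVec, hη, zero_dotProduct]
  · intro h
    classical
    change v ∈ LinearMap.range A.mulVecLin
    rw [← Subspace.forall_mem_dualAnnihilator_apply_eq_zero_iff]
    intro φ hφ
    obtain ⟨η, rfl⟩ := (dotProductEquiv K m).surjective φ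
    refine h η (funext fun j => ?_)
    have hj := (Submodule.mem_dualAnnihilator _).1 hφ _ (LinearMap.mem_range_self _ (Pi.single j 1))
    rwa [dotProductEquiv_apply_apply, mulVecLin_apply, dotProduct_mulVec, dotProduct_single,
      mul_one] at hj

theorem Matrix.exists_map_ofReal_mulVec_eq_of_forall_vecMul_eq_zero {m n : Type*} [Fintype m]
    [Fintype n] (A : Matrix m n ℝ) (c : m → ℂ)
    (h : ∀ η : m → ℝ, η ᵥ* A = 0 → (Complex.ofReal ∘ η) ⬝ᵥ c = 0) :
    ∃ ξ, A.map Complex.ofReal *ᵥ ξ = c := by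
  refine (A.map Complex.ofReal).exists_mulVec_eq_iff_forall_vecMul_eq_zero c |>.2 fun η hη => ?_
  have hre : (fun i => (η i).re) ᵥ* A = 0 := funext fun j => by
    simpa [vecMul, dotProduct, Complex.re_sum] using congrArg Complex.re (congrFun hη j)
  have him : (fun i => (η i).im) ᵥ* A = 0 := funext fun j => by
    simpa [vecMul, dotProduct, Complex.im_sum] using congrArg Complex.im (congrFun hη j)
  have hsplit : η = Complex.ofReal ∘ (fun i => (η i).re) +
      Complex.I • (Complex.ofReal ∘ fun i => (η i).im) :=
    funext fun i => by
      simp only [Pi.add_apply, Function.comp_apply, Pi.smul_apply, smul_eq_mul,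
        mul_comm Complex.I, Complex.re_add_im]
  rw [hsplit, add_dotProduct, smul_dotProduct, h _ hre, h _ him, smul_zero, add_zero]

theorem Matrix.ofReal_comp_vecMul {m n : Type*} [Fintype m] (A : Matrix m n ℝ) (θ : m → ℝ) :
    (Complex.ofReal ∘ θ) ᵥ* A.map Complex.ofReal = Complex.ofReal ∘ (θ ᵥ* A) :=
  funext fun j => (Complex.ofRealHom.map_vecMul A θ j).symm

theorem Matrix.forall_vecMul_eq_imp_dotProduct_eq_iff {m n : Type*} [Fintype m] [Fintype n]
    (A : Matrix m n ℝ) {b : n → ℝ} (hb : ∃ θ, θ ᵥ* A = b) (c : m → ℂ) (d : ℂ) :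
    (∀ θ : m → ℝ, θ ᵥ* A = b → (Complex.ofReal ∘ θ) ⬝ᵥ c = d) ↔
      ∃ ξ, A.map Complex.ofReal *ᵥ ξ = c ∧ (Complex.ofReal ∘ b) ⬝ᵥ ξ = d := by
  constructor
  · intro h
    obtain ⟨θ₀, hθ₀⟩ := hb
    have hker : ∀ η : m → ℝ, η ᵥ* A = 0 → (Complex.ofReal ∘ η) ⬝ᵥ c = 0 := fun η hη => by
      have hshift := h (θ₀ + η) (by rw [add_vecMul, hθ₀, hη, add_zero])
      have hcomp : Complex.ofReal ∘ (θ₀ + η) = Complex.ofReal ∘ θ₀ + Complex.ofReal ∘ η :=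
        funext fun i => Complex.ofReal_add _ _
      rwa [hcomp, add_dotProduct, h θ₀ hθ₀, add_eq_left] at hshift
    obtain ⟨ξ, hξ⟩ := A.exists_map_ofReal_mulVec_eq_of_forall_vecMul_eq_zero c hker
    refine ⟨ξ, hξ, ?_⟩
    rw [← hθ₀, ← A.ofReal_comp_vecMul, ← dotProduct_mulVec, hξ, h θ₀ hθ₀]
  · rintro ⟨ξ, hAξ, hbξ⟩ θ hθ
    rw [← hAξ, dotProduct_mulVec, A.ofReal_comp_vecMul, hθ, hbξ]

/-- `[p; q̄]` in the paper's notation: `p` stacked on `q` with its last entry dropped. -/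
def stackInit {α : Type*} {n : ℕ} (p q : Fin (n + 1) → α) : Fin (2 * n + 1) → α :=
  fun i => if h : (i : ℕ) < n + 1 then p ⟨i, h⟩ else q ⟨i - (n + 1), by omega⟩

theorem stackInit_eq_stackInit_and_last_eq_iff {α : Type*} {n : ℕ}
    {p q p' q' : Fin (n + 1) → α} :
    stackInit p q = stackInit p' q' ∧ q (Fin.last n) = q' (Fin.last n) ↔ p = p' ∧ q = q' := by
  refine ⟨fun ⟨h, hlast⟩ => ⟨funext fun k => ?_, funext fun k => ?_⟩,
    fun ⟨hp, hq⟩ => hp ▸ hq ▸ ⟨rfl, rfl⟩⟩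
  · simpa [stackInit, show (k : ℕ) ≤ n by omega] using congrFun h ⟨k, by omega⟩
  · by_cases hk : (k : ℕ) = n
    · rwa [show k = Fin.last n from Fin.ext hk]
    · simpa [stackInit, show ¬(k : ℕ) + (n + 1) ≤ n by omega]
        using congrFun h ⟨k + (n + 1), by omega⟩

/-- The real data matrix `[H_n(U); H̄_n(Y)]`. -/
def dataMatrix (n T : ℕ) (u y : ℕ → ℝ) : Matrix (Fin (2 * n + 1)) (Fin (T - n + 1)) ℝ :=
  of fun i j => if (i : ℕ) < n + 1 then u ((i : ℕ) + (j : ℕ)) else y ((i : ℕ) - (n + 1) + (j : ℕ))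

theorem inSigmaUY_iff {n T : ℕ} {u y : ℕ → ℝ} {θ : Fin (2 * n + 1) → ℝ} :
    inSigmaUY n T u y θ ↔ θ ᵥ* dataMatrix n T u y = fun j : Fin (T - n + 1) => y (n + (j : ℕ)) :=
  funext_iff.symm

theorem inSigmaM_iff {n : ℕ} {σ M : ℂ} {θ : Fin (2 * n + 1) → ℝ} :
    inSigmaM n σ M θ ↔
      (Complex.ofReal ∘ θ) ⬝ᵥ stackInit (gammaVec n σ) (M • gammaVec n σ) = M * σ ^ n := by
  simp [inSigmaM, stackInit, dotProduct, gammaVec]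

theorem map_dataMatrix_mulVec (n T : ℕ) (u y : ℕ → ℝ) (ξ : Fin (T - n + 1) → ℂ) :
    (dataMatrix n T u y).map Complex.ofReal *ᵥ ξ =
      stackInit (hankelC u n T *ᵥ ξ) (hankelC y n T *ᵥ ξ) := by
  funext i
  simp only [dataMatrix, stackInit, hankelC, mulVec, dotProduct, map_apply, of_apply]
  split_ifs <;> rfl

theorem ofReal_comp_dotProduct_eq_hankelC_mulVec_last (n T : ℕ) (y : ℕ → ℝ)
    (ξ : Fin (T - n + 1) → ℂ) :
    (Complex.ofReal ∘ fun j : Fin (T - n + 1) => y (n + (j : ℕ))) ⬝ᵥ ξ =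
      (hankelC y n T *ᵥ ξ) (Fin.last n) :=
  rfl

theorem informativity_inclusion_iff_general (n T : ℕ)
    (u y : ℕ → ℝ) (σ M : ℂ)
    (hne : ∃ θ : Fin (2 * n + 1) → ℝ, inSigmaUY n T u y θ) :
    (∀ θ : Fin (2 * n + 1) → ℝ, inSigmaUY n T u y θ → inSigmaM n σ M θ) ↔
      ∃ ξ : Fin (T - n + 1) → ℂ,
        (hankelC u n T).mulVec ξ = gammaVec n σ ∧
        (hankelC y n T).mulVec ξ = M • gammaVec n σ := by
  simp only [inSigmaUY_iff, inSigmaM_iff] at hne ⊢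
  rw [(dataMatrix n T u y).forall_vecMul_eq_imp_dotProduct_eq_iff hne]
  refine exists_congr fun ξ => ?_
  rw [map_dataMatrix_mulVec, ofReal_comp_dotProduct_eq_hankelC_mulVec_last,
    show M * σ ^ n = (M • gammaVec n σ) (Fin.last n) from rfl,
    stackInit_eq_stackInit_and_last_eq_iff]

/-- If `Σ_{U,Y}` is nonempty, then `Σ_{U,Y} ⊆ Σ_{σ,M}` holds
if and only if there exists `ξ ∈ ℂ^{T-n+1}` with `H_n(U)·ξ = γ_n(σ)` and
`H_n(Y)·ξ = M·γ_n(σ)`. -/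
theorem informativity_inclusion_iff (n T : ℕ) (hn : 1 ≤ n) (hT : n ≤ T)
    (u y : ℕ → ℝ) (σ M : ℂ)
    (hne : ∃ θ : Fin (2 * n + 1) → ℝ, inSigmaUY n T u y θ) :
    (∀ θ : Fin (2 * n + 1) → ℝ, inSigmaUY n T u y θ → inSigmaM n σ M θ) ↔
      ∃ ξ : Fin (T - n + 1) → ℂ,
        (hankelC u n T).mulVec ξ = gammaVec n σ ∧
        (hankelC y n T).mulVec ξ = M • gammaVec n σ :=
  informativity_inclusion_iff_general n T u y σ M hne
end

section
/- Let n ≥ 1 and T ≥ n be integers and let U = (ū_0,…,ū_T), Y = (ȳ_0,…,ȳ_T) be real data sequences. Let σ, M ∈ ℂ. If there exists ξ ∈ ℂ^{T−n+1} such that H_n(U)·ξ = γ_n(σ) and H_n(Y)·ξ = M·γ_n(σ), then Σ_{U,Y} ⊆ Σ_{σ,M} (no nonemptiness assumption on Σ_{U,Y} is needed for this direction). -/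
open Matrix

/-- If there exists `ξ ∈ ℂ^{T-n+1}` with `H_n(U)·ξ = γ_n(σ)` and
`H_n(Y)·ξ = M·γ_n(σ)`, then `Σ_{U,Y} ⊆ Σ_{σ,M}` (no nonemptiness assumption needed). -/
theorem inclusion_of_solution (n T : ℕ) (hn : 1 ≤ n) (hT : n ≤ T)
    (u y : ℕ → ℝ) (σ M : ℂ)
    (hsol : ∃ ξ : Fin (T - n + 1) → ℂ,
        (hankelC u n T).mulVec ξ = gammaVec n σ ∧
        (hankelC y n T).mulVec ξ = M • gammaVec n σ) :
    ∀ θ : Fin (2 * n + 1) → ℝ, inSigmaUY n T u y θ → inSigmaM n σ M θ := by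
  obtain ⟨ξ, hu, hy⟩ := hsol
  intro θ hθ
  unfold inSigmaM
  have key : ∀ i : Fin (2 * n + 1),
      (if (i : ℕ) < n + 1 then σ ^ (i : ℕ) else M * σ ^ ((i : ℕ) - (n + 1)))
        = ∑ j : Fin (T - n + 1),
            (if (i : ℕ) < n + 1 then (u ((i : ℕ) + (j : ℕ)) : ℂ)
             else (y ((i : ℕ) - (n + 1) + (j : ℕ)) : ℂ)) * ξ j := by
    intro i
    by_cases h : (i : ℕ) < n + 1
    · simp only [h, if_true]
      have := congrFun hu ⟨(i : ℕ), h⟩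
      simpa [hankelC, gammaVec, mulVec, dotProduct] using this.symm
    · simp only [h, if_false]
      have hk : (i : ℕ) - (n + 1) < n + 1 := by omega
      have := congrFun hy ⟨(i : ℕ) - (n + 1), hk⟩
      simpa [hankelC, gammaVec, mulVec, dotProduct, Pi.smul_apply, smul_eq_mul]
        using this.symm
  have hrhs : M * σ ^ n = ∑ j : Fin (T - n + 1), (y (n + (j : ℕ)) : ℂ) * ξ j := by
    have := congrFun hy ⟨n, by omega⟩
    simpa [hankelC, gammaVec, mulVec, dotProduct, Pi.smul_apply, smul_eq_mul]
      using this.symm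
  calc ∑ i : Fin (2 * n + 1),
        (θ i : ℂ) * (if (i : ℕ) < n + 1 then σ ^ (i : ℕ) else M * σ ^ ((i : ℕ) - (n + 1)))
      = ∑ i : Fin (2 * n + 1), ∑ j : Fin (T - n + 1),
          (θ i : ℂ) * ((if (i : ℕ) < n + 1 then (u ((i : ℕ) + (j : ℕ)) : ℂ)
             else (y ((i : ℕ) - (n + 1) + (j : ℕ)) : ℂ)) * ξ j) := by
        refine Finset.sum_congr rfl fun i _ => ?_
        rw [key i, Finset.mul_sum]
    _ = ∑ j : Fin (T - n + 1), (∑ i : Fin (2 * n + 1),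
          (θ i : ℂ) * (if (i : ℕ) < n + 1 then (u ((i : ℕ) + (j : ℕ)) : ℂ)
             else (y ((i : ℕ) - (n + 1) + (j : ℕ)) : ℂ))) * ξ j := by
        rw [Finset.sum_comm]
        refine Finset.sum_congr rfl fun j _ => ?_
        rw [Finset.sum_mul]
        exact Finset.sum_congr rfl fun i _ => (mul_assoc _ _ _).symm
    _ = ∑ j : Fin (T - n + 1), (y (n + (j : ℕ)) : ℂ) * ξ j := by
        refine Finset.sum_congr rfl fun j _ => ?_
        congr 1
        have := hθ j
        push_cast [← this]
        simp [apply_ite (fun r : ℝ => (r : ℂ))]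
    _ = M * σ ^ n := hrhs.symm
end

section
/- Let n ≥ 1 and T ≥ n be integers, let U = (ū_0,…,ū_T), Y = (ȳ_0,…,ȳ_T) be real data sequences with Σ_{U,Y} nonempty, and let σ ∈ ℂ. Then the data (U,Y) is informative for interpolation at σ (i.e., there exists a unique M ∈ ℂ with Σ_{U,Y} ⊆ Σ_{σ,M}) if and only if both rank conditions hold: (i) rank [H_n(U), 0, γ_n(σ); H_n(Y), γ_n(σ), 0] = rank [H_n(U), 0; H_n(Y), γ_n(σ)], and (ii) rank [H_n(U), 0; H_n(Y), γ_n(σ)] = rank [H_n(U); H_n(Y)] + 1, where all ranks are of complex matrices. -/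
open Matrix

/-!
Write `θ = [q −p]` as the row `w = [q −p −1]`, indexed like the rows of `A = [H_n(U); H_n(Y)]`.
Then `θ ∈ Σ_{U,Y}` says `w A = 0`, and `θ ∈ Σ_{σ,M}` says `w·c₂ + M (w·c₁) = 0` with
`c₁ = (0; γ_n(σ))`, `c₂ = (γ_n(σ); 0)`. So `Σ_{U,Y}` is a nonempty slice `{w_last = −1}` of the
real left kernel of `A`; a linear condition holding on such a slice holds on the whole kernel, and
as `A` is real, on the complex left kernel too. Hence informativity means that there is exactly
one `M` with `v·c₂ + M (v·c₁) = 0` on the complex left kernel, i.e. `v·c₁ = 0 → v·c₂ = 0` there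
and `v·c₁ ≠ 0` somewhere. By duality these are the rank conditions: adjoining a column `b` keeps
the rank iff `b` is orthogonal to the left kernel, and raises it by one otherwise.
-/

section LinearAlgebra

variable {K V W : Type*} [Field K] [AddCommGroup V] [Module K V] [AddCommGroup W] [Module K W]

lemma existsUnique_forall_add_mul_eq_zero_iff (S : Submodule K V) (f g : V →ₗ[K] K) :
    (∃! c : K, ∀ v ∈ S, g v + c * f v = 0) ↔
      (∀ v ∈ S, f v = 0 → g v = 0) ∧ ∃ v ∈ S, f v ≠ 0 := by
  constructor
  · rintro ⟨c, hc, hunique⟩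
    refine ⟨fun v hv hfv => by simpa [hfv] using hc v hv, ?_⟩
    by_contra! hf
    have : c + 1 = c := hunique (c + 1) fun v hv => by simpa [hf v hv] using hc v hv
    simp at this
  · rintro ⟨hker, z, hz, hfz⟩
    refine ⟨-g z / f z, fun v hv => ?_, fun c hc => ?_⟩
    · have hw : (f v / f z) • z - v ∈ S := S.sub_mem (S.smul_mem _ hz) hv
      have := hker _ hw (by simp [hfz])
      simp only [map_sub, map_smul, smul_eq_mul] at this
      linear_combination -this
    · rw [eq_div_iff hfz]
      linear_combination hc z hz

lemma forall_mem_eq_zero_iff_of_apply_eq (S : Submodule K V) (ℓ : V →ₗ[K] K) (ψ : V →ₗ[K] W)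
    {w₀ : V} {c : K} (hw₀ : w₀ ∈ S) (hℓ : ℓ w₀ = c) (hc : c ≠ 0) :
    (∀ w ∈ S, ℓ w = c → ψ w = 0) ↔ ∀ w ∈ S, ψ w = 0 := by
  refine ⟨fun h w hw => ?_, fun h w hw _ => h w hw⟩
  -- Moving `w` along `w₀` onto the slice `ℓ = c` does not change `ψ w`, since `ψ w₀ = 0`.
  have hw' : w + (1 - ℓ w / c) • w₀ ∈ S := S.add_mem hw (S.smul_mem _ hw₀)
  have := h _ hw' (by simp only [map_add, map_smul, smul_eq_mul, hℓ]; field_simp; ring)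
  simpa [h w₀ hw₀ hℓ] using this

variable {m ι : Type*}

lemma mem_range_mulVecLin_iff [Fintype m] [Fintype ι] (A : Matrix m ι K) (b : m → K) :
    b ∈ LinearMap.range A.mulVecLin ↔ ∀ v : m → K, v ᵥ* A = 0 → v ⬝ᵥ b = 0 := by
  classical
  rw [← Subspace.forall_mem_dualAnnihilator_apply_eq_zero_iff,
    ← (dotProductEquiv K m).forall_congr_right]
  simp [Submodule.mem_dualAnnihilator, dotProduct_mulVec, dotProduct_eq_zero_iff]

lemma vecMul_fromCols_replicateCol_eq_zero_iff [Fintype m] (A : Matrix m ι K) (b v : m → K) :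
    v ᵥ* fromCols A (replicateCol (Fin 1) b) = 0 ↔ v ᵥ* A = 0 ∧ v ⬝ᵥ b = 0 := by
  simp [funext_iff, Matrix.vecMul, dotProduct]

lemma range_mulVecLin_fromCols_replicateCol [Fintype ι] (A : Matrix m ι K) (b : m → K) :
    LinearMap.range (fromCols A (replicateCol (Fin 1) b)).mulVecLin =
      LinearMap.range A.mulVecLin ⊔ K ∙ b := by
  have hcols : (fromCols A (replicateCol (Fin 1) b)).col = Sum.elim A.col fun _ => b := by
    ext (j | j) <;> rfl
  rw [Matrix.range_mulVecLin, Matrix.range_mulVecLin, hcols, Set.Sum.elim_range, Set.range_const,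
    Submodule.span_union]

lemma rank_fromCols_replicateCol_of_mem [Fintype ι] (A : Matrix m ι K) {b : m → K}
    (hb : b ∈ LinearMap.range A.mulVecLin) :
    (fromCols A (replicateCol (Fin 1) b)).rank = A.rank := by
  rw [rank, rank, range_mulVecLin_fromCols_replicateCol,
    sup_eq_left.mpr ((Submodule.span_singleton_le_iff_mem _ _).mpr hb)]

lemma rank_fromCols_replicateCol_of_notMem [Fintype m] [Fintype ι] (A : Matrix m ι K)
    {b : m → K} (hb : b ∉ LinearMap.range A.mulVecLin) :
    (fromCols A (replicateCol (Fin 1) b)).rank = A.rank + 1 := by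
  rw [rank, rank, range_mulVecLin_fromCols_replicateCol, Submodule.finrank_sup_span_singleton hb]

lemma rank_fromCols_replicateCol_eq_iff [Fintype m] [Fintype ι] (A : Matrix m ι K) (b : m → K) :
    (fromCols A (replicateCol (Fin 1) b)).rank = A.rank ↔
      ∀ v : m → K, v ᵥ* A = 0 → v ⬝ᵥ b = 0 := by
  rw [← mem_range_mulVecLin_iff]
  by_cases hb : b ∈ LinearMap.range A.mulVecLin
  · simp [rank_fromCols_replicateCol_of_mem A hb, hb]
  · simp [rank_fromCols_replicateCol_of_notMem A hb, hb]

lemma rank_fromCols_replicateCol_eq_add_one_iff [Fintype m] [Fintype ι] (A : Matrix m ι K)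
    (b : m → K) :
    (fromCols A (replicateCol (Fin 1) b)).rank = A.rank + 1 ↔
      ∃ v : m → K, v ᵥ* A = 0 ∧ v ⬝ᵥ b ≠ 0 := by
  have := mem_range_mulVecLin_iff A b
  by_cases hb : b ∈ LinearMap.range A.mulVecLin
  · simp_all [rank_fromCols_replicateCol_of_mem A hb]
  · simp_all [rank_fromCols_replicateCol_of_notMem A hb]

end LinearAlgebra

section RealMatrix

variable {m ι : Type*} [Fintype m]

lemma vecMul_map_ofReal_eq_zero_iff (B : Matrix m ι ℝ) (v : m → ℂ) :
    v ᵥ* B.map (↑) = 0 ↔ (fun i => (v i).re) ᵥ* B = 0 ∧ (fun i => (v i).im) ᵥ* B = 0 := by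
  simp only [funext_iff, Complex.ext_iff, Matrix.vecMul, dotProduct, Complex.re_sum,
    Complex.im_sum, map_apply, Complex.mul_re, Complex.mul_im, Complex.ofReal_re,
    Complex.ofReal_im, Pi.zero_apply, Complex.zero_re, Complex.zero_im, mul_zero, sub_zero,
    zero_add]
  exact forall_and

lemma forall_linearCombination_eq_zero_iff_forall_dotProduct (B : Matrix m ι ℝ) (c : m → ℂ) :
    (∀ w : m → ℝ, w ᵥ* B = 0 → Fintype.linearCombination ℝ c w = 0) ↔
      ∀ v : m → ℂ, v ᵥ* B.map (↑) = 0 → v ⬝ᵥ c = 0 := by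
  have hreal (w : m → ℝ) : Fintype.linearCombination ℝ c w = (fun i => (w i : ℂ)) ⬝ᵥ c := by
    simp [Fintype.linearCombination_apply, dotProduct, Complex.real_smul]
  constructor
  · intro h v hv
    obtain ⟨hre, him⟩ := (vecMul_map_ofReal_eq_zero_iff B v).1 hv
    have hv : v = (fun i => ((v i).re : ℂ)) + Complex.I • fun i => ((v i).im : ℂ) := by
      ext i
      rw [Pi.add_apply, Pi.smul_apply, smul_eq_mul, mul_comm]
      exact (Complex.re_add_im (v i)).symm
    rw [hv, add_dotProduct, smul_dotProduct, ← hreal, ← hreal, h _ hre, h _ him, smul_zero,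
      add_zero]
  · intro h w hw
    rw [hreal]
    exact h _ ((vecMul_map_ofReal_eq_zero_iff B _).2 ⟨hw, zero_vecMul B⟩)

end RealMatrix

section AugmentedParam

variable {R A : Type*} [Ring R] [AddCommGroup A] [Module R A]

/-- For `θ = [q −p]` this is the row `[q −p −1]`, indexed like the rows of `stackUY`. -/
def augmentedParam (n : ℕ) (θ : Fin (2 * n + 1) → R) : Fin (n + 1) ⊕ Fin (n + 1) → R :=
  Sum.elim (fun i => θ (Fin.castLE (by omega) i))
    (Fin.snoc (fun k : Fin n => θ ⟨n + 1 + k, by omega⟩) (-1))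

@[simp]
lemma augmentedParam_inr_last (n : ℕ) (θ : Fin (2 * n + 1) → R) :
    augmentedParam n θ (Sum.inr (Fin.last n)) = -1 := by
  simp [augmentedParam]

lemma exists_augmentedParam_eq {n : ℕ} {w : Fin (n + 1) ⊕ Fin (n + 1) → R}
    (hw : w (Sum.inr (Fin.last n)) = -1) : ∃ θ, augmentedParam n θ = w := by
  refine ⟨fun i => if h : (i : ℕ) < n + 1 then w (.inl ⟨i, h⟩)
    else w (.inr ⟨i - (n + 1), by omega⟩), ?_⟩
  ext (i | k)
  · simp only [augmentedParam, Sum.elim_inl, Fin.val_castLE]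
    rw [dif_pos i.isLt]
  · induction k using Fin.lastCases with
    | last => simp [augmentedParam, hw]
    | cast k =>
      simp only [augmentedParam, Sum.elim_inr, Fin.snoc_castSucc]
      rw [dif_neg (by omega)]
      exact congrArg (w ∘ Sum.inr) (Fin.ext (by simp))

lemma sum_smul_ite_eq_linearCombination_augmentedParam (n : ℕ) (θ : Fin (2 * n + 1) → R)
    (a b : ℕ → A) :
    ∑ i : Fin (2 * n + 1), θ i • (if (i : ℕ) < n + 1 then a i else b (i - (n + 1))) =
      Fintype.linearCombination R (Sum.elim (fun k : Fin (n + 1) => a k)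
        (fun k : Fin (n + 1) => b k)) (augmentedParam n θ) + b n := by
  have hsnoc (f : Fin n → R) : ∑ k : Fin (n + 1), Fin.snoc (α := fun _ => R) f (-1) k • b k =
      ∑ k : Fin n, f k • b k - b n := by
    simp [Fin.sum_univ_castSucc, sub_eq_add_neg]
  have hsecond (k : ℕ) : ¬ n + 1 + k < n + 1 := by omega
  rw [← Fin.sum_congr' _ (by omega : n + 1 + n = 2 * n + 1), Fin.sum_univ_add,
    Fintype.linearCombination_apply, Fintype.sum_sum_type]
  simp only [augmentedParam, Sum.elim_inl, Sum.elim_inr, hsnoc, ← add_sub_assoc, sub_add_cancel,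
    Fin.val_cast, Fin.val_castAdd, Fin.val_natAdd, Fin.is_lt, if_true, hsecond, if_false,
    Nat.add_sub_cancel_left]
  rfl

end AugmentedParam

def stackUYReal (u y : ℕ → ℝ) (n T : ℕ) :
    Matrix (Fin (n + 1) ⊕ Fin (n + 1)) (Fin (T - n + 1)) ℝ :=
  Matrix.of fun i j =>
    Sum.elim (fun k : Fin (n + 1) => u (k + j)) (fun k : Fin (n + 1) => y (k + j)) i

lemma stackUYReal_map_ofReal (u y : ℕ → ℝ) (n T : ℕ) :
    (stackUYReal u y n T).map (↑) = stackUY u y n T := by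
  ext (i | i) j <;> rfl

lemma inSigmaUY_iff_vecMul_eq_zero {n T : ℕ} {u y : ℕ → ℝ} {θ : Fin (2 * n + 1) → ℝ} :
    inSigmaUY n T u y θ ↔ augmentedParam n θ ᵥ* stackUYReal u y n T = 0 := by
  have hsum (j : Fin (T - n + 1)) := sum_smul_ite_eq_linearCombination_augmentedParam n θ
    (fun k => u (k + j)) (fun k => y (k + j))
  simp only [smul_eq_mul, Fintype.linearCombination_apply] at hsum
  simp only [inSigmaUY, hsum, add_eq_right, funext_iff]
  rfl

lemma inSigmaM_iff_linearCombination_eq_zero {n : ℕ} {σ M : ℂ} {θ : Fin (2 * n + 1) → ℝ} :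
    inSigmaM n σ M θ ↔ Fintype.linearCombination ℝ (Sum.elim (gammaVec n σ) (M • gammaVec n σ))
      (augmentedParam n θ) = 0 := by
  have hsum := sum_smul_ite_eq_linearCombination_augmentedParam n θ (fun k => σ ^ k)
    (fun k => M * σ ^ k)
  simp only [Complex.real_smul] at hsum
  rw [inSigmaM, hsum, add_eq_right]
  rfl

lemma forall_inSigmaUY_imp_inSigmaM_iff {n T : ℕ} {u y : ℕ → ℝ} {σ : ℂ}
    {θ₀ : Fin (2 * n + 1) → ℝ} (hθ₀ : inSigmaUY n T u y θ₀) (M : ℂ) :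
    (∀ θ, inSigmaUY n T u y θ → inSigmaM n σ M θ) ↔
      ∀ v, v ᵥ* stackUY u y n T = 0 →
        v ⬝ᵥ Sum.elim (gammaVec n σ) 0 + M * v ⬝ᵥ Sum.elim (0 : Fin (n + 1) → ℂ) (gammaVec n σ)
          = 0 := by
  set d : Fin (n + 1) ⊕ Fin (n + 1) → ℂ := Sum.elim (gammaVec n σ) (M • gammaVec n σ)
  set S := LinearMap.ker (stackUYReal u y n T).vecMulLinear
  calc (∀ θ, inSigmaUY n T u y θ → inSigmaM n σ M θ)
      ↔ ∀ w ∈ S, LinearMap.proj (Sum.inr (Fin.last n)) w = (-1 : ℝ) →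
          Fintype.linearCombination ℝ d w = 0 := by
        refine ⟨fun h w hw hlast => ?_, fun h θ hθ =>
          inSigmaM_iff_linearCombination_eq_zero.2
            (h _ (inSigmaUY_iff_vecMul_eq_zero.1 hθ) (augmentedParam_inr_last n θ))⟩
        obtain ⟨θ, rfl⟩ := exists_augmentedParam_eq hlast
        exact inSigmaM_iff_linearCombination_eq_zero.1 (h θ (inSigmaUY_iff_vecMul_eq_zero.2 hw))
    _ ↔ ∀ w ∈ S, Fintype.linearCombination ℝ d w = 0 :=
        forall_mem_eq_zero_iff_of_apply_eq S _ _ (inSigmaUY_iff_vecMul_eq_zero.1 hθ₀)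
          (augmentedParam_inr_last n θ₀) (by norm_num)
    _ ↔ ∀ v, v ᵥ* stackUY u y n T = 0 → v ⬝ᵥ d = 0 := by
        rw [← stackUYReal_map_ofReal]
        exact forall_linearCombination_eq_zero_iff_forall_dotProduct _ _
    _ ↔ _ := by
        have hd : d = Sum.elim (gammaVec n σ) 0
            + M • Sum.elim (0 : Fin (n + 1) → ℂ) (gammaVec n σ) := by
          ext (i | i) <;> simp [d]
        simp only [hd, dotProduct_add, dotProduct_smul, smul_eq_mul]

theorem informative_iff_rank_conditions_general (n T : ℕ)
    (u y : ℕ → ℝ) (σ : ℂ)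
    (hne : ∃ θ : Fin (2 * n + 1) → ℝ, inSigmaUY n T u y θ) :
    (∃! M : ℂ, ∀ θ : Fin (2 * n + 1) → ℝ, inSigmaUY n T u y θ → inSigmaM n σ M θ) ↔
      ((Matrix.fromCols (Matrix.fromCols (stackUY u y n T) (colZeroGamma n σ))
          (colGammaZero n σ)).rank =
        (Matrix.fromCols (stackUY u y n T) (colZeroGamma n σ)).rank ∧
       (Matrix.fromCols (stackUY u y n T) (colZeroGamma n σ)).rank =
        (stackUY u y n T).rank + 1) := by
  obtain ⟨θ₀, hθ₀⟩ := hne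
  set c₁ : Fin (n + 1) ⊕ Fin (n + 1) → ℂ := Sum.elim 0 (gammaVec n σ)
  set c₂ : Fin (n + 1) ⊕ Fin (n + 1) → ℂ := Sum.elim (gammaVec n σ) 0
  have hunique := existsUnique_forall_add_mul_eq_zero_iff
    (LinearMap.ker (stackUY u y n T).vecMulLinear)
    ((dotProductBilin ℂ ℂ).flip c₁) ((dotProductBilin ℂ ℂ).flip c₂)
  simp only [LinearMap.mem_ker, LinearMap.flip_apply, vecMulBilin_apply,
    dotProductBilin_apply_apply] at hunique
  rw [existsUnique_congr (forall_inSigmaUY_imp_inSigmaM_iff hθ₀), hunique,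
    show colZeroGamma n σ = replicateCol (Fin 1) c₁ from rfl,
    show colGammaZero n σ = replicateCol (Fin 1) c₂ from rfl,
    rank_fromCols_replicateCol_eq_iff, rank_fromCols_replicateCol_eq_add_one_iff]
  simp only [vecMul_fromCols_replicateCol_eq_zero_iff, and_imp]

/-- **Theorem 2 of the paper.** With `Σ_{U,Y}` nonempty, the data `(U,Y)` is
informative for interpolation at `σ` (there exists a unique `M` with `Σ_{U,Y} ⊆ Σ_{σ,M}`)
iff both rank conditions hold:
`rank [H_n(U), 0, γ_n(σ); H_n(Y), γ_n(σ), 0] = rank [H_n(U), 0; H_n(Y), γ_n(σ)]` and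
`rank [H_n(U), 0; H_n(Y), γ_n(σ)] = rank [H_n(U); H_n(Y)] + 1`. -/
theorem informative_iff_rank_conditions (n T : ℕ) (hn : 1 ≤ n) (hT : n ≤ T)
    (u y : ℕ → ℝ) (σ : ℂ)
    (hne : ∃ θ : Fin (2 * n + 1) → ℝ, inSigmaUY n T u y θ) :
    (∃! M : ℂ, ∀ θ : Fin (2 * n + 1) → ℝ, inSigmaUY n T u y θ → inSigmaM n σ M θ) ↔
      ((Matrix.fromCols (Matrix.fromCols (stackUY u y n T) (colZeroGamma n σ))
          (colGammaZero n σ)).rank =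
        (Matrix.fromCols (stackUY u y n T) (colZeroGamma n σ)).rank ∧
       (Matrix.fromCols (stackUY u y n T) (colZeroGamma n σ)).rank =
        (stackUY u y n T).rank + 1) :=
  informative_iff_rank_conditions_general n T u y σ hne
end

section
/- Let n ≥ 1 and T ≥ n be integers, let U, Y be real data sequences of length T+1, and let σ ∈ ℂ. The linear system H_n(U)·ξ = γ_n(σ), H_n(Y)·ξ = M·γ_n(σ) has a solution (ξ, M) ∈ ℂ^{T−n+1} × ℂ if and only if rank [H_n(U), 0, γ_n(σ); H_n(Y), γ_n(σ), 0] = rank [H_n(U), 0; H_n(Y), γ_n(σ)], where ranks are of complex matrices. -/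
/-!
The system says exactly that `[H_n(U), 0; H_n(Y), γ_n(σ)]·(ξ; -M) = (γ_n(σ); 0)`, so it is
solvable iff `(γ_n(σ); 0)` lies in the column space of `[H_n(U), 0; H_n(Y), γ_n(σ)]`. By the
Rouché–Capelli criterion this holds iff appending `(γ_n(σ); 0)` as a further column does not
raise the rank.
-/

open Matrix

namespace Matrix

variable {K m n ι : Type*} [Fintype n] [Fintype ι]

theorem range_mulVecLin_fromCols [CommSemiring K] (A : Matrix m n K) (B : Matrix m ι K) :
    LinearMap.range (fromCols A B).mulVecLin =
      LinearMap.range A.mulVecLin ⊔ LinearMap.range B.mulVecLin := by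
  have hcols : (fromCols A B).col = Sum.elim A.col B.col := by ext (j | j) <;> rfl
  rw [range_mulVecLin, range_mulVecLin, range_mulVecLin, hcols, Set.Sum.elim_range,
    Submodule.span_union]

theorem range_mulVecLin_replicateCol [CommSemiring K] [Nonempty ι] (b : m → K) :
    LinearMap.range (replicateCol ι b).mulVecLin = K ∙ b := by
  rw [range_mulVecLin, ← Set.range_const (ι := ι) (c := b)]
  rfl

theorem rank_fromCols_replicateCol_eq_rank_iff [Field K] [Nonempty ι] (A : Matrix m n K)
    (b : m → K) : (fromCols A (replicateCol ι b)).rank = A.rank ↔ ∃ x, A *ᵥ x = b := by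
  have hb : (∃ x, A *ᵥ x = b) ↔ b ∈ LinearMap.range A.mulVecLin := by simp
  rw [hb, rank, rank, range_mulVecLin_fromCols, range_mulVecLin_replicateCol]
  constructor
  · intro h
    exact (Submodule.eq_of_le_of_finrank_eq le_sup_left h.symm).ge
      (Submodule.mem_sup_right (Submodule.mem_span_singleton_self b))
  · intro hmem
    rw [sup_eq_left.mpr ((Submodule.span_singleton_le_iff_mem _ _).mpr hmem)]

theorem exists_fromCols_replicateCol_mulVec_eq_iff [CommSemiring K] [Unique ι]
    (A : Matrix m n K) (w c : m → K) :
    (∃ x, fromCols A (replicateCol ι w) *ᵥ x = c) ↔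
      ∃ (ξ : n → K) (t : K), A *ᵥ ξ + t • w = c := by
  have hcol : ∀ v : ι → K, replicateCol ι w *ᵥ v = v default • w := by
    intro v; ext i; simp [mulVec, dotProduct, mul_comm]
  constructor
  · rintro ⟨x, hx⟩
    exact ⟨x ∘ Sum.inl, x (Sum.inr default), by simpa [hcol] using hx⟩
  · rintro ⟨ξ, t, h⟩
    exact ⟨Sum.elim ξ fun _ => t, by rw [fromCols_mulVec_sumElim, hcol, h]⟩

theorem exists_fromRows_mulVec_add_smul_eq_iff [Ring K] (P Q : Matrix m n K) (g : m → K) :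
    (∃ (ξ : n → K) (t : K),
        fromRows P Q *ᵥ ξ + t • Sum.elim (0 : m → K) g = Sum.elim g 0) ↔
      ∃ (ξ : n → K) (M : K), P *ᵥ ξ = g ∧ Q *ᵥ ξ = M • g := by
  have hsplit : ∀ (ξ : n → K) (t : K),
      fromRows P Q *ᵥ ξ + t • Sum.elim (0 : m → K) g =
        Sum.elim (P *ᵥ ξ) (Q *ᵥ ξ + t • g) := by
    intro ξ t; ext (i | i) <;> simp
  simp only [hsplit, Sum.elim_eq_iff, add_eq_zero_iff_eq_neg, ← neg_smul]
  constructor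
  · rintro ⟨ξ, t, hP, hQ⟩
    exact ⟨ξ, -t, hP, hQ⟩
  · rintro ⟨ξ, M, hP, hQ⟩
    exact ⟨ξ, -M, hP, by rwa [neg_neg]⟩

end Matrix

theorem solvable_iff_rank_condition_general (n T : ℕ)
    (u y : ℕ → ℝ) (σ : ℂ) :
    (∃ (ξ : Fin (T - n + 1) → ℂ) (M : ℂ),
        (hankelC u n T).mulVec ξ = gammaVec n σ ∧
        (hankelC y n T).mulVec ξ = M • gammaVec n σ) ↔
      (Matrix.fromCols (Matrix.fromCols (stackUY u y n T) (colZeroGamma n σ))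
          (colGammaZero n σ)).rank =
        (Matrix.fromCols (stackUY u y n T) (colZeroGamma n σ)).rank := by
  have hcol : colGammaZero n σ = replicateCol (Fin 1) (Sum.elim (gammaVec n σ) 0) := rfl
  have hzero : colZeroGamma n σ = replicateCol (Fin 1) (Sum.elim 0 (gammaVec n σ)) := rfl
  rw [hcol, rank_fromCols_replicateCol_eq_rank_iff, hzero,
    exists_fromCols_replicateCol_mulVec_eq_iff, stackUY, exists_fromRows_mulVec_add_smul_eq_iff]

/-- The linear system `H_n(U)·ξ = γ_n(σ)`, `H_n(Y)·ξ = M·γ_n(σ)` has a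
solution `(ξ, M)` iff
`rank [H_n(U), 0, γ_n(σ); H_n(Y), γ_n(σ), 0] = rank [H_n(U), 0; H_n(Y), γ_n(σ)]`. -/
theorem solvable_iff_rank_condition (n T : ℕ) (hn : 1 ≤ n) (hT : n ≤ T)
    (u y : ℕ → ℝ) (σ : ℂ) :
    (∃ (ξ : Fin (T - n + 1) → ℂ) (M : ℂ),
        (hankelC u n T).mulVec ξ = gammaVec n σ ∧
        (hankelC y n T).mulVec ξ = M • gammaVec n σ) ↔
      (Matrix.fromCols (Matrix.fromCols (stackUY u y n T) (colZeroGamma n σ))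
          (colGammaZero n σ)).rank =
        (Matrix.fromCols (stackUY u y n T) (colZeroGamma n σ)).rank :=
  solvable_iff_rank_condition_general n T u y σ
end

section
/- Let n ≥ 1 and T ≥ n be integers, let U, Y be real data sequences of length T+1 generated by the true system with parameters p̄ ∈ ℝ^{1×n}, q̄ ∈ ℝ^{1×(n+1)} (i.e., ȳ_{t+n} + Σ_{i<n} p̄_i ȳ_{t+i} = Σ_{j≤n} q̄_j ū_{t+j} for all 0 ≤ t ≤ T−n), and let σ ∈ ℂ with P̄(σ) := σ^n + p̄_{n−1}σ^{n−1} + ⋯ + p̄_0 ≠ 0. If the data (U,Y) is informative for interpolation at σ with unique value M ∈ ℂ (i.e., M is the unique complex number with Σ_{U,Y} ⊆ Σ_{σ,M}), then M = Q̄(σ)/P̄(σ), where Q̄(σ) := q̄_n σ^n + q̄_{n−1}σ^{n−1} + ⋯ + q̄_0. -/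
open Matrix

/-- If the data is generated by the true system with parameters
`p̄, q̄`, the interpolation point `σ` satisfies `P̄(σ) ≠ 0`, and the data is informative
for interpolation at `σ` with unique value `M`, then `M = Q̄(σ)/P̄(σ)`. -/
theorem unique_value_is_transfer_function (n T : ℕ) (hn : 1 ≤ n) (hT : n ≤ T)
    (u y : ℕ → ℝ) (p : Fin n → ℝ) (q : Fin (n + 1) → ℝ)
    (hdata : ∀ t : ℕ, t ≤ T - n →
      y (t + n) + ∑ i : Fin n, p i * y (t + (i : ℕ)) =
        ∑ j : Fin (n + 1), q j * u (t + (j : ℕ)))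
    (σ : ℂ)
    (hP : σ ^ n + ∑ i : Fin n, (p i : ℂ) * σ ^ (i : ℕ) ≠ 0)
    (M : ℂ)
    (hM : (∀ θ : Fin (2 * n + 1) → ℝ, inSigmaUY n T u y θ → inSigmaM n σ M θ) ∧
      ∀ M' : ℂ,
        (∀ θ : Fin (2 * n + 1) → ℝ, inSigmaUY n T u y θ → inSigmaM n σ M' θ) → M' = M) :
    M = (∑ j : Fin (n + 1), (q j : ℂ) * σ ^ (j : ℕ)) /
        (σ ^ n + ∑ i : Fin n, (p i : ℂ) * σ ^ (i : ℕ)) := by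
  classical
  -- split lemma for sums over Fin (2n+1)
  have hsplit : ∀ {α : Type} [inst : AddCommMonoid α] (f : ℕ → α),
      ∑ i : Fin (2*n+1), f i
        = ∑ i ∈ Finset.range (n+1), f i + ∑ i ∈ Finset.range n, f (n+1+i) := by
    intro α inst f
    rw [Fin.sum_univ_eq_sum_range,
      ← Finset.sum_range_add_sum_Ico f (show n+1 ≤ 2*n+1 by omega),
      Finset.sum_Ico_eq_sum_range]
    have h : 2*n+1-(n+1) = n := by omega
    rw [h]
  -- the true parameter vector
  set θ' : ℕ → ℝ := fun i =>
    if h : i < n + 1 then q ⟨i, h⟩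
    else if h2 : i - (n+1) < n then -p ⟨i - (n+1), h2⟩ else 0 with hθ'
  have hθUY : inSigmaUY n T u y (fun i => θ' (i : ℕ)) := by
    intro j
    have hj : (j : ℕ) ≤ T - n := by omega
    have hd := hdata (j : ℕ) hj
    have hsum : (∑ i : Fin (2 * n + 1),
        θ' (i : ℕ) * (if (i : ℕ) < n + 1 then u ((i : ℕ) + (j : ℕ))
             else y ((i : ℕ) - (n + 1) + (j : ℕ))))
        = ∑ i ∈ Finset.range (n+1),
            θ' i * (if i < n + 1 then u (i + (j : ℕ)) else y (i - (n + 1) + (j : ℕ)))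
          + ∑ i ∈ Finset.range n,
            θ' (n+1+i) * (if n+1+i < n + 1 then u (n+1+i + (j : ℕ))
              else y (n+1+i - (n + 1) + (j : ℕ))) :=
      hsplit (fun i => θ' i * (if i < n + 1 then u (i + (j : ℕ)) else y (i - (n + 1) + (j : ℕ))))
    rw [hsum]
    have h1 : ∑ i ∈ Finset.range (n+1),
        θ' i * (if i < n + 1 then u (i + (j : ℕ)) else y (i - (n + 1) + (j : ℕ)))
        = ∑ i : Fin (n+1), q i * u ((j : ℕ) + (i : ℕ)) := by
      rw [Finset.sum_range]
      apply Finset.sum_congr rfl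
      intro i _
      have hi : (i : ℕ) < n + 1 := i.isLt
      simp only [hθ', dif_pos hi, if_pos hi, Fin.eta]
      rw [add_comm (j : ℕ) (i : ℕ)]
    have h2 : ∑ i ∈ Finset.range n,
        θ' (n+1+i) * (if n+1+i < n + 1 then u (n+1+i + (j : ℕ))
          else y (n+1+i - (n + 1) + (j : ℕ)))
        = ∑ i : Fin n, (-p i) * y ((j : ℕ) + (i : ℕ)) := by
      rw [Finset.sum_range]
      apply Finset.sum_congr rfl
      intro i _
      have hi : (i : ℕ) < n := i.isLt
      have hni : ¬ (n+1+(i:ℕ) < n+1) := by omega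
      have hsub : n+1+(i:ℕ) - (n+1) = (i:ℕ) := by omega
      simp only [hθ', dif_neg hni, if_neg hni, hsub, dif_pos hi, Fin.eta]
      rw [add_comm (i : ℕ) (j : ℕ)]
    rw [h1, h2]
    have : y (n + (j : ℕ)) = y ((j : ℕ) + n) := by rw [add_comm]
    rw [this]
    have := hd
    push_cast at this ⊢
    simp only [neg_mul, Finset.sum_neg_distrib]
    linarith [this]
  -- apply informativity
  have hθM := hM.1 _ hθUY
  unfold inSigmaM at hθM
  have hsumC : (∑ i : Fin (2 * n + 1),
      ((θ' (i : ℕ) : ℝ) : ℂ) * (if (i : ℕ) < n + 1 then σ ^ (i : ℕ)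
                 else M * σ ^ ((i : ℕ) - (n + 1))))
      = ∑ i ∈ Finset.range (n+1),
          ((θ' i : ℝ) : ℂ) * (if i < n + 1 then σ ^ i else M * σ ^ (i - (n + 1)))
        + ∑ i ∈ Finset.range n,
          ((θ' (n+1+i) : ℝ) : ℂ) * (if n+1+i < n + 1 then σ ^ (n+1+i)
            else M * σ ^ (n+1+i - (n + 1))) :=
    hsplit (fun i => ((θ' i : ℝ) : ℂ) * (if i < n + 1 then σ ^ i else M * σ ^ (i - (n + 1))))
  rw [hsumC] at hθM
  have h1 : ∑ i ∈ Finset.range (n+1),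
      ((θ' i : ℝ) : ℂ) * (if i < n + 1 then σ ^ i else M * σ ^ (i - (n + 1)))
      = ∑ i : Fin (n+1), (q i : ℂ) * σ ^ (i : ℕ) := by
    rw [Finset.sum_range]
    apply Finset.sum_congr rfl
    intro i _
    have hi : (i : ℕ) < n + 1 := i.isLt
    simp only [hθ', dif_pos hi, if_pos hi, Fin.eta]
  have h2 : ∑ i ∈ Finset.range n,
      ((θ' (n+1+i) : ℝ) : ℂ) * (if n+1+i < n + 1 then σ ^ (n+1+i)
        else M * σ ^ (n+1+i - (n + 1)))
      = ∑ i : Fin n, (-(p i : ℂ)) * (M * σ ^ (i : ℕ)) := by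
    rw [Finset.sum_range]
    apply Finset.sum_congr rfl
    intro i _
    have hi : (i : ℕ) < n := i.isLt
    have hni : ¬ (n+1+(i:ℕ) < n+1) := by omega
    have hsub : n+1+(i:ℕ) - (n+1) = (i:ℕ) := by omega
    simp only [hθ', dif_neg hni, if_neg hni, hsub, dif_pos hi, Fin.eta]
    push_cast
    ring
  rw [h1, h2] at hθM
  rw [eq_div_iff hP]
  have hexp : ∑ i : Fin n, (-(p i : ℂ)) * (M * σ ^ (i : ℕ))
      = -(M * ∑ i : Fin n, (p i : ℂ) * σ ^ (i : ℕ)) := by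
    rw [Finset.mul_sum]
    rw [← Finset.sum_neg_distrib]
    apply Finset.sum_congr rfl
    intro i _
    ring
  rw [hexp] at hθM
  linear_combination -hθM
end

section
/- Let n ≥ 1 and T ≥ n be integers, let U, Y be real data sequences of length T+1, and let p̄ ∈ ℝ^{1×n}, q̄ ∈ ℝ^{1×(n+1)}. Suppose the data uniquely identifies the system, i.e., Σ_{U,Y} = { [q̄ −p̄] }, and let σ ∈ ℂ satisfy P̄(σ) := σ^n + p̄_{n−1}σ^{n−1} + ⋯ + p̄_0 ≠ 0. Then the data (U,Y) is informative for interpolation at σ: there exists a unique M ∈ ℂ with Σ_{U,Y} ⊆ Σ_{σ,M}, namely M = Q̄(σ)/P̄(σ) with Q̄(σ) := q̄_n σ^n + q̄_{n−1}σ^{n−1} + ⋯ + q̄_0. -/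
open Matrix

lemma key (n : ℕ) (σ M : ℂ) (p : Fin n → ℝ) (q : Fin (n + 1) → ℝ) :
    (∑ i : Fin (2 * n + 1),
      ((if h : (i : ℕ) < n + 1 then q ⟨(i : ℕ), h⟩
        else -p ⟨(i : ℕ) - (n + 1), by have := i.isLt; omega⟩ : ℝ) : ℂ)
        * (if (i : ℕ) < n + 1 then σ ^ (i : ℕ)
           else M * σ ^ ((i : ℕ) - (n + 1))))
      = (∑ j : Fin (n + 1), (q j : ℂ) * σ ^ (j : ℕ))
        - M * ∑ i : Fin n, (p i : ℂ) * σ ^ (i : ℕ) := by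
  set qn : ℕ → ℂ := fun k => if h : k < n + 1 then ((q ⟨k, h⟩ : ℝ) : ℂ) else 0 with hqn
  set pn : ℕ → ℂ := fun k => if h : k < n then ((p ⟨k, h⟩ : ℝ) : ℂ) else 0 with hpn
  set g : ℕ → ℂ := fun k =>
    (if k < n + 1 then qn k else -pn (k - (n + 1)))
    * (if k < n + 1 then σ ^ k else M * σ ^ (k - (n + 1))) with hg
  have hsum : (∑ i : Fin (2 * n + 1),
      ((if h : (i : ℕ) < n + 1 then q ⟨(i : ℕ), h⟩
        else -p ⟨(i : ℕ) - (n + 1), by have := i.isLt; omega⟩ : ℝ) : ℂ)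
        * (if (i : ℕ) < n + 1 then σ ^ (i : ℕ)
           else M * σ ^ ((i : ℕ) - (n + 1)))) = ∑ i : Fin (2 * n + 1), g (i : ℕ) := by
    apply Finset.sum_congr rfl
    intro i _
    rw [hg, hqn, hpn]
    by_cases h : (i : ℕ) < n + 1
    · simp [h]
    · have h2 : (i : ℕ) - (n + 1) < n := by have := i.isLt; omega
      simp [h, h2]
  have hQ : (∑ j : Fin (n + 1), (q j : ℂ) * σ ^ (j : ℕ))
      = ∑ k ∈ Finset.range (n + 1), qn k * σ ^ k := by
    rw [← Fin.sum_univ_eq_sum_range (fun k => qn k * σ ^ k)]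
    apply Finset.sum_congr rfl
    intro j _
    rw [hqn]
    simp [j.isLt]
  have hPp : (∑ i : Fin n, (p i : ℂ) * σ ^ (i : ℕ))
      = ∑ k ∈ Finset.range n, pn k * σ ^ k := by
    rw [← Fin.sum_univ_eq_sum_range (fun k => pn k * σ ^ k)]
    apply Finset.sum_congr rfl
    intro j _
    rw [hpn]
    simp [j.isLt]
  rw [hsum, Fin.sum_univ_eq_sum_range,
    ← Finset.sum_range_add_sum_Ico _ (show n + 1 ≤ 2 * n + 1 by omega),
    Finset.sum_Ico_eq_sum_range, hQ, hPp]
  have h1 : ∀ i ∈ Finset.range (n + 1), g i = qn i * σ ^ i := by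
    intro i hi
    simp only [Finset.mem_range] at hi
    rw [hg]
    simp only [if_pos hi]
  have h2 : ∀ i ∈ Finset.range (2 * n + 1 - (n + 1)), g (n + 1 + i)
      = -(M * (pn i * σ ^ i)) := by
    intro i hi
    simp only [Finset.mem_range] at hi
    rw [hg]
    simp only [if_neg (show ¬ n + 1 + i < n + 1 by omega)]
    have he : n + 1 + i - (n + 1) = i := by omega
    rw [he]
    ring
  rw [Finset.sum_congr rfl h1, Finset.sum_congr rfl h2]
  have : 2 * n + 1 - (n + 1) = n := by omega
  rw [this, Finset.sum_neg_distrib, ← Finset.mul_sum]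
  ring


/-- If the data uniquely identifies the system, i.e.
`Σ_{U,Y} = {[q̄ -p̄]}`, and `P̄(σ) ≠ 0`, then the data is informative for interpolation
at `σ`: `M = Q̄(σ)/P̄(σ)` is the unique complex number with `Σ_{U,Y} ⊆ Σ_{σ,M}`. -/
theorem informative_of_identification (n T : ℕ) (hn : 1 ≤ n) (hT : n ≤ T)
    (u y : ℕ → ℝ) (p : Fin n → ℝ) (q : Fin (n + 1) → ℝ)
    (hid : ∀ θ : Fin (2 * n + 1) → ℝ, inSigmaUY n T u y θ ↔
      θ = fun i : Fin (2 * n + 1) =>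
        if h : (i : ℕ) < n + 1 then q ⟨(i : ℕ), h⟩
        else -p ⟨(i : ℕ) - (n + 1), by have := i.isLt; omega⟩)
    (σ : ℂ)
    (hP : σ ^ n + ∑ i : Fin n, (p i : ℂ) * σ ^ (i : ℕ) ≠ 0) :
    (∀ θ : Fin (2 * n + 1) → ℝ, inSigmaUY n T u y θ →
        inSigmaM n σ ((∑ j : Fin (n + 1), (q j : ℂ) * σ ^ (j : ℕ)) /
          (σ ^ n + ∑ i : Fin n, (p i : ℂ) * σ ^ (i : ℕ))) θ) ∧
      ∀ M' : ℂ,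
        (∀ θ : Fin (2 * n + 1) → ℝ, inSigmaUY n T u y θ → inSigmaM n σ M' θ) →
          M' = (∑ j : Fin (n + 1), (q j : ℂ) * σ ^ (j : ℕ)) /
            (σ ^ n + ∑ i : Fin n, (p i : ℂ) * σ ^ (i : ℕ)) := by
  
  set Qv := ∑ j : Fin (n + 1), (q j : ℂ) * σ ^ (j : ℕ) with hQv
  set Pv := σ ^ n + ∑ i : Fin n, (p i : ℂ) * σ ^ (i : ℕ) with hPv
  constructor
  · intro θ hθ
    rw [(hid θ).mp hθ]
    unfold inSigmaM
    rw [show (∑ i : Fin (2 * n + 1),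
      (((fun i : Fin (2 * n + 1) =>
        if h : (i : ℕ) < n + 1 then q ⟨(i : ℕ), h⟩
        else -p ⟨(i : ℕ) - (n + 1), by have := i.isLt; omega⟩) i : ℝ) : ℂ)
        * (if (i : ℕ) < n + 1 then σ ^ (i : ℕ)
           else Qv / Pv * σ ^ ((i : ℕ) - (n + 1))))
      = Qv - Qv / Pv * ∑ i : Fin n, (p i : ℂ) * σ ^ (i : ℕ) from key n σ (Qv / Pv) p q]
    rw [hPv] at hP ⊢
    field_simp
    ring
  · intro M' hM'
    have hbar := hM' _ ((hid _).mpr rfl)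
    unfold inSigmaM at hbar
    rw [show (∑ i : Fin (2 * n + 1),
      (((fun i : Fin (2 * n + 1) =>
        if h : (i : ℕ) < n + 1 then q ⟨(i : ℕ), h⟩
        else -p ⟨(i : ℕ) - (n + 1), by have := i.isLt; omega⟩) i : ℝ) : ℂ)
        * (if (i : ℕ) < n + 1 then σ ^ (i : ℕ)
           else M' * σ ^ ((i : ℕ) - (n + 1))))
      = Qv - M' * ∑ i : Fin n, (p i : ℂ) * σ ^ (i : ℕ) from key n σ M' p q] at hbar
    rw [eq_div_iff hP]
    rw [hPv]
    linear_combination -hbar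
end
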